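/- Let G be a finite group, N ⊴ G, and H ≤ G with gcd(|H|,|N|) = 1. If H is an ICPC-subgroup of G, then HN/N is an ICPC-subgroup of G/N. -/

import Mathlib

/-- `A` covers the factor `K/L` if `K ≤ LA`. -/
def Covers {G : Type*} [Group G] (A K L : Subgroup G) : Prop := K ≤ L ⊔ A

/-- `A` avoids the factor `K/L` if `A ∩ K ≤ L`. -/
def Avoids {G : Type*} [Group G] (A K L : Subgroup G) : Prop := A ⊓ K ≤ L

/-- `K/L` is a chief factor of `G`: both are normal, `L < K`, and there is no
normal subgroup of `G` strictly between `L` and `K`. -/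
def IsChiefFactor {G : Type*} [Group G] (K L : Subgroup G) : Prop :=
  K.Normal ∧ L.Normal ∧ L < K ∧
    ∀ M : Subgroup G, M.Normal → L < M → M ≤ K → M = K

/-- `A` is a `p`-CAP-subgroup of `G`: it covers or avoids every `pd`-chief factor. -/
def IsPCAP {G : Type*} [Group G] (p : ℕ) (A : Subgroup G) : Prop :=
  ∀ K L : Subgroup G, IsChiefFactor K L → p ∣ Nat.card (K ⧸ L.subgroupOf K) →
    Covers A K L ∨ Avoids A K L

/-- `H` is an `ICPC`-subgroup of `G` (for the prime `p`). -/
def IsICPC {G : Type*} [Group G] (p : ℕ) (H : Subgroup G) : Prop :=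
  ∃ A : Subgroup G, A ≤ H ∧ IsPCAP p A ∧ H ⊓ ⁅H, (⊤ : Subgroup G)⁆ ≤ A

/-! The `p`-CAP property passes to surjective images, since a chief factor `K/L` of `G/N` pulls
back to a chief factor of `G` of the same order. For the commutator condition,
`[HN/N, G/N] = [H, G]N/N`, and coprimality of `|H|` and `|N|` gives `H ∩ [H, G]N = H ∩ [H, G]`. -/

open scoped commutatorElement in
theorem Subgroup.commutator_top_normal {G : Type*} [Group G] (H : Subgroup G) :
    ⁅H, (⊤ : Subgroup G)⁆.Normal := by
  rw [Subgroup.commutator_def, ← Subgroup.normalizer_eq_top_iff, eq_top_iff,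
    Subgroup.le_normalizer_closure_iff]
  rintro g - _ ⟨h, hh, y, -, rfl⟩
  have hconj : g * ⁅h, y⁆ * g⁻¹ = ⁅h, g⁆⁻¹ * ⁅h, g * y⁆ := by group
  rw [hconj]
  exact mul_mem (inv_mem (Subgroup.subset_closure ⟨h, hh, g, trivial, rfl⟩))
    (Subgroup.subset_closure ⟨h, hh, g * y, trivial, rfl⟩)

/-- An element of `H` lying in `DN` has, modulo `D`, order dividing both `|H|` and `|N|`. -/
theorem Subgroup.inf_sup_le_of_coprime {G : Type*} [Group G] (H D N : Subgroup G) [D.Normal]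
    (hcop : Nat.Coprime (Nat.card H) (Nat.card N)) : H ⊓ (D ⊔ N) ≤ D := by
  rintro x ⟨hxH, hxDN⟩
  obtain ⟨d, hd, n, hn, rfl⟩ := Set.ext_iff.mp (Subgroup.normal_mul D N) x |>.mp hxDN
  have hdn : QuotientGroup.mk' D (d * n) = QuotientGroup.mk' D n := by
    rw [map_mul, show QuotientGroup.mk' D d = 1 from (QuotientGroup.eq_one_iff d).mpr hd, one_mul]
  have hdvdH := (orderOf_map_dvd (QuotientGroup.mk' D) (d * n)).trans
    (Subgroup.orderOf_dvd_natCard H hxH)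
  have hdvdN := (orderOf_map_dvd (QuotientGroup.mk' D) n).trans
    (Subgroup.orderOf_dvd_natCard N hn)
  rw [← hdn] at hdvdN
  have hord := Nat.eq_one_of_dvd_one (hcop ▸ Nat.dvd_gcd hdvdH hdvdN)
  exact (QuotientGroup.eq_one_iff _).mp (orderOf_eq_one_iff.mp hord)

theorem Subgroup.map_inf_map_le {G Q : Type*} [Group G] [Group Q] (f : G →* Q)
    (H D : Subgroup G) : H.map f ⊓ D.map f ≤ (H ⊓ (D ⊔ f.ker)).map f := by
  rintro _ ⟨⟨h, hh, rfl⟩, hD⟩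
  refine ⟨h, ⟨hh, ?_⟩, rfl⟩
  rwa [← Subgroup.comap_map_eq]

section ChiefFactor

variable {G Q : Type*} [Group G] [Group Q] {f : G →* Q}

theorem IsChiefFactor.comap (hf : Function.Surjective f) {K L : Subgroup Q}
    (hKL : IsChiefFactor K L) : IsChiefFactor (K.comap f) (L.comap f) := by
  obtain ⟨hK, hL, hlt, hmax⟩ := hKL
  refine ⟨hK.comap f, hL.comap f, (Subgroup.comap_lt_comap_of_surjective hf).mpr hlt, ?_⟩
  intro M hM hLM hMK
  have hkerM : f.ker ≤ M := (Subgroup.ker_le_comap f L).trans hLM.le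
  rw [← Subgroup.comap_map_eq_self hkerM] at hLM ⊢
  rw [Subgroup.comap_lt_comap_of_surjective hf] at hLM
  rw [hmax (M.map f) (hM.map f hf) hLM
    (by rw [← Subgroup.map_comap_eq_self_of_surjective hf K]; exact Subgroup.map_mono hMK)]

theorem Covers.map {A K L : Subgroup G} (h : Covers A K L) (f : G →* Q) :
    Covers (A.map f) (K.map f) (L.map f) := by
  unfold Covers at h ⊢
  rw [← Subgroup.map_sup]
  exact Subgroup.map_mono h

theorem Avoids.map_of_comap {A : Subgroup G} {K L : Subgroup Q}
    (h : Avoids A (K.comap f) (L.comap f)) : Avoids (A.map f) K L := by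
  rintro _ ⟨⟨a, ha, rfl⟩, haK⟩
  exact h ⟨ha, haK⟩

theorem IsPCAP.map {p : ℕ} {A : Subgroup G} (hA : IsPCAP p A) (hf : Function.Surjective f) :
    IsPCAP p (A.map f) := by
  intro K L hKL hp
  have hindex : (L.comap f).relIndex (K.comap f) = L.relIndex K := by
    rw [Subgroup.relIndex_comap, Subgroup.map_comap_eq_self_of_surjective hf]
  refine (hA _ _ (hKL.comap hf) (show p ∣ (L.comap f).relIndex (K.comap f) by rwa [hindex])).imp (fun hcov => ?_) Avoids.map_of_comap
  simpa only [Subgroup.map_comap_eq_self_of_surjective hf] using hcov.map f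

end ChiefFactor

theorem stmt_7_general {G : Type*} [Group G] (p : ℕ) (H N : Subgroup G)
    [N.Normal] (hcop : Nat.Coprime (Nat.card H) (Nat.card N))
    (h : IsICPC p H) :
    IsICPC p (H.map (QuotientGroup.mk' N)) := by
  obtain ⟨A, hAH, hA, hcomm⟩ := h
  set f := QuotientGroup.mk' N
  have hf : Function.Surjective f := QuotientGroup.mk'_surjective N
  refine ⟨A.map f, Subgroup.map_mono hAH, hA.map hf, ?_⟩
  have := H.commutator_top_normal
  calc H.map f ⊓ ⁅H.map f, ⊤⁆
      = H.map f ⊓ (⁅H, ⊤⁆ : Subgroup G).map f := by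
        rw [Subgroup.map_commutator, Subgroup.map_top_of_surjective f hf]
    _ ≤ (H ⊓ (⁅H, ⊤⁆ ⊔ f.ker)).map f := Subgroup.map_inf_map_le f H _
    _ ≤ (H ⊓ ⁅H, ⊤⁆).map f := by
        rw [QuotientGroup.ker_mk']
        exact Subgroup.map_mono (le_inf inf_le_left (H.inf_sup_le_of_coprime _ N hcop))
    _ ≤ A.map f := Subgroup.map_mono hcomm

theorem stmt_7 {G : Type*} [Group G] [Finite G] (p : ℕ) (H N : Subgroup G)
    [N.Normal] (hcop : Nat.Coprime (Nat.card H) (Nat.card N))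
    (h : IsICPC p H) :
    IsICPC p (H.map (QuotientGroup.mk' N)) :=
  stmt_7_general p H N hcop h
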